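/- Let Γ be a finite group, T a right Γ-graph, and (K,L) a pair of finite Γ-simplicial complexes (L a Γ-subcomplex of K). Then for every integer r ≥ 2, the pair (A_T(Sd^r(K)), A_T(Sd^r(L))) is a 2^{r-2}-NDR pair of graphs. -/

import Mathlib

universe u

/-- An abstract simplicial complex on the vertex type `V`: a family of finite subsets of `V`
closed under taking subsets. -/
structure Cplx (V : Type*) where
  faces : Set (Set V)
  finite_mem : ∀ σ ∈ faces, Set.Finite σ
  down_closed : ∀ σ ∈ faces, ∀ τ ⊆ σ, τ ∈ faces

/-- The vertex set of a simplicial complex. -/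
def Cplx.verts {V : Type*} (K : Cplx V) : Set V := {v | ({v} : Set V) ∈ K.faces}

/-- `a` is an action of the group `Γ` on the vertex type of `K` by simplicial automorphisms. -/
def IsCplxAction (Γ : Type*) [Group Γ] {V : Type*} (a : Γ → V → V) (K : Cplx V) : Prop :=
  (∀ v, a 1 v = v) ∧ (∀ γ γ' : Γ, ∀ v, a (γ * γ') v = a γ (a γ' v)) ∧
    ∀ γ : Γ, ∀ σ ∈ K.faces, (a γ) '' σ ∈ K.faces

/-- A simplicial multi-map from `K` to `L`: it assigns to each vertex of `K` a nonempty subset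
of the vertices of `L`, so that `⋃ v ∈ σ, η v` is a simplex of `L` for every simplex `σ` of
`K`. -/
def IsMultiMap {V W : Type*} (K : Cplx V) (L : Cplx W) (η : V → Set W) : Prop :=
  (∀ v ∈ K.verts, (η v).Nonempty) ∧ ∀ σ ∈ K.faces, (⋃ v ∈ σ, η v) ∈ L.faces

/-- A Γ-equivariant simplicial multi-map, i.e. an element of `Map_Γ(K, L)`. -/
def IsEquivMultiMap (Γ : Type*) [Group Γ] {V W : Type*} (a : Γ → V → V) (b : Γ → W → W)
    (K : Cplx V) (L : Cplx W) (η : V → Set W) : Prop :=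
  IsMultiMap K L η ∧ ∀ γ : Γ, ∀ v ∈ K.verts, η (a γ v) = (b γ) '' (η v)

/-- Pointwise order on multi-maps out of `K` (on the vertices of `K`). -/
def mmLE {V W : Type*} (K : Cplx V) (η η' : V → Set W) : Prop := ∀ v ∈ K.verts, η v ⊆ η' v

/-- An element of `Def_Γ(K, L)`: a Γ-equivariant simplicial multi-map `K → K` with
`η v = {v}` for every vertex `v` of the subcomplex `L`. -/
def IsDefMultiMap (Γ : Type*) [Group Γ] {V : Type*} (a : Γ → V → V) (K L : Cplx V)
    (η : V → Set V) : Prop :=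
  IsEquivMultiMap Γ a a K K η ∧ ∀ v ∈ L.verts, η v = {v}

/-- One step of a zigzag in `Def_Γ(K, L)`: both multi-maps lie in `Def_Γ(K, L)` and they are
comparable. -/
def cplxDefStep (Γ : Type*) [Group Γ] {V : Type*} (a : Γ → V → V) (K L : Cplx V)
    (η η' : V → Set V) : Prop :=
  IsDefMultiMap Γ a K L η ∧ IsDefMultiMap Γ a K L η' ∧ (mmLE K η η' ∨ mmLE K η' η)

/-- The Γ-simplicial complex `K` strongly Γ-collapses to its Γ-subcomplex `L`: there is a
simplicial map `f` belonging to the identity component of `Def_Γ(K, L)` (joined to the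
identity by a finite zigzag of pairwise comparable elements) whose image is contained in
`L`. -/
def CplxCollapses (Γ : Type*) [Group Γ] {V : Type*} (a : Γ → V → V) (K L : Cplx V) : Prop :=
  ∃ f : V → V, IsDefMultiMap Γ a K L (fun v => {f v}) ∧
    Relation.ReflTransGen (cplxDefStep Γ a K L) (fun v => {v}) (fun v => {f v}) ∧
    ∀ σ ∈ K.faces, f '' σ ∈ L.faces
/-- The face poset of `K`, realized as the set of nonempty simplices of `K` inside the poset
`Set V` (ordered by inclusion). -/
def facePoset {V : Type*} (K : Cplx V) : Set (Set V) := {σ | σ ∈ K.faces ∧ σ.Nonempty}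

/-- The barycentric subdivision `Sd(K) = Δ(FK)`: the simplicial complex on the nonempty
simplices of `K` whose simplices are the finite chains of the face poset of `K`. -/
def sd {V : Type*} (K : Cplx V) : Cplx (Set V) where
  faces := {c | c.Finite ∧ (∀ σ ∈ c, σ ∈ facePoset K) ∧ IsChain (· ⊆ ·) c}
  finite_mem := fun _ h => h.1
  down_closed := fun c hc d hdc =>
    ⟨hc.1.subset hdc, fun σ hσ => hc.2.1 σ (hdc hσ),
      by exact hc.2.2.mono hdc⟩
/-- The neighborhood `ν_K(L) = ⋃_{v ∈ V(L)} st_K(v)` of the subcomplex `L` in `K`. -/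
def nbhd {V : Type*} (K L : Cplx V) : Cplx V where
  faces := {σ | ∃ v ∈ L.verts, insert v σ ∈ K.faces}
  finite_mem := fun σ h => by
    obtain ⟨v, -, h⟩ := h
    exact (K.finite_mem _ h).subset (Set.subset_insert _ _)
  down_closed := fun σ h τ hτσ => by
    obtain ⟨v, hv, h⟩ := h
    exact ⟨v, hv, K.down_closed _ h _ (Set.insert_subset_insert hτσ)⟩

/-- The iterated neighborhood `ν^r_K(L)` (with `ν^0_K(L) = L`). -/
def nbhdIter {V : Type*} (K L : Cplx V) : ℕ → Cplx V
  | 0 => L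
  | r + 1 => nbhd K (nbhdIter K L r)

/-- `(K, L)` is an `r`-NDR pair of Γ-simplicial complexes: there is a Γ-subcomplex `A` of `K`
containing `ν^r_K(L)` (and `L`) which strongly Γ-collapses to `L`. -/
def IsNDRPair (Γ : Type*) [Group Γ] {V : Type*} (a : Γ → V → V) (K L : Cplx V) (r : ℕ) : Prop :=
  ∃ A : Cplx V, A.faces ⊆ K.faces ∧ L.faces ⊆ A.faces ∧
    (∀ γ : Γ, ∀ σ ∈ A.faces, (a γ) '' σ ∈ A.faces) ∧
    (nbhdIter K L r).faces ⊆ A.faces ∧ CplxCollapses Γ a A L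
/-- The vertex type of the `r`-fold barycentric subdivision of a complex on `V`. -/
def IterT (V : Type u) : ℕ → Type u
  | 0 => V
  | r + 1 => Set (IterT V r)

/-- The iterated barycentric subdivision `Sd^r(K)`. -/
def sdIter {V : Type u} (K : Cplx V) : (r : ℕ) → Cplx (IterT V r)
  | 0 => K
  | r + 1 => sd (sdIter K r)

/-- The action induced on the vertices of the `r`-fold barycentric subdivision. -/
def actIter {Γ : Type*} {V : Type u} (a : Γ → V → V) : (r : ℕ) → Γ → IterT V r → IterT V r
  | 0 => a
  | r + 1 => fun γ σ => (actIter a r γ) '' σ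

/-- A graph: a symmetric (loops allowed) adjacency relation on the vertex type `V`. -/
structure LGraph (V : Type*) where
  Adj : V → V → Prop
  symm : ∀ v w, Adj v w → Adj w v

/-- A graph homomorphism from `G` to `H`. -/
def IsGraphHom {V W : Type*} (G : LGraph V) (H : LGraph W) (f : V → W) : Prop :=
  ∀ v w, G.Adj v w → H.Adj (f v) (f w)

/-- A multi-homomorphism from `G` to `H`: it assigns to each vertex of `G` a nonempty set of
vertices of `H` so that adjacent vertices have completely adjacent images.  The
multi-homomorphisms, ordered pointwise by inclusion, form the Hom complex `Hom(G, H)`. -/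
def IsMultiHom {V W : Type*} (G : LGraph V) (H : LGraph W) (η : V → Set W) : Prop :=
  (∀ v, (η v).Nonempty) ∧ ∀ v w, G.Adj v w → ∀ x ∈ η v, ∀ y ∈ η w, H.Adj x y

/-- One step of a zigzag in `Hom(G, H)`: both multi-homomorphisms are comparable. -/
def mhStep {V W : Type*} (G : LGraph V) (H : LGraph W) (η η' : V → Set W) : Prop :=
  IsMultiHom G H η ∧ IsMultiHom G H η' ∧ ((∀ v, η v ⊆ η' v) ∨ (∀ v, η' v ⊆ η v))

/-- Two graph homomorphisms are ×-homotopic iff they lie in the same connected component of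
the Hom complex `Hom(G, H)`. -/
def XHomotopic {V W : Type*} (G : LGraph V) (H : LGraph W) (f g : V → W) : Prop :=
  Relation.ReflTransGen (mhStep G H) (fun v => {f v}) (fun v => {g v})

/-- `f : G → H` is a ×-homotopy equivalence. -/
def IsXHomotopyEquiv {V W : Type*} (G : LGraph V) (H : LGraph W) (f : V → W) : Prop :=
  IsGraphHom G H f ∧ ∃ h : W → V, IsGraphHom H G h ∧
    XHomotopic G G (h ∘ f) id ∧ XHomotopic H H (f ∘ h) id
/-- An element of `Def(G, H)`, where `H` is the induced subgraph of `G` on `S`: a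
multi-homomorphism `η : G → G` with `η w = {w}` for every vertex `w` of `H`. -/
def IsDefMultiHom {V : Type*} (G : LGraph V) (S : Set V) (η : V → Set V) : Prop :=
  IsMultiHom G G η ∧ ∀ w ∈ S, η w = {w}

/-- One step of a zigzag in `Def(G, H)`. -/
def defMHStep {V : Type*} (G : LGraph V) (S : Set V) (η η' : V → Set V) : Prop :=
  IsDefMultiHom G S η ∧ IsDefMultiHom G S η' ∧ ((∀ v, η v ⊆ η' v) ∨ (∀ v, η' v ⊆ η v))

/-- The induced subgraph of `G` on `S` is a ×-homotopy deformation retract of `G`: there is a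
graph homomorphism `f` in the identity component of `Def(G, H)` with `f v ∈ S` for every
vertex `v` of `G`. -/
def IsXDefRetract {V : Type*} (G : LGraph V) (S : Set V) : Prop :=
  ∃ f : V → V, IsDefMultiHom G S (fun v => {f v}) ∧
    Relation.ReflTransGen (defMHStep G S) (fun v => {v}) (fun v => {f v}) ∧
    ∀ v, f v ∈ S
/-- A subgraph of `G`: a set of vertices together with a symmetric set of edges of `G`. -/
structure Subgraph {V : Type*} (G : LGraph V) where
  verts : Set V
  Adj : V → V → Prop
  adj_sub : ∀ v w, Adj v w → G.Adj v w
  symm : ∀ v w, Adj v w → Adj w v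

/-- Containment of subgraphs of `G`. -/
def Subgraph.le {V : Type*} {G : LGraph V} (H H' : Subgraph G) : Prop :=
  H.verts ⊆ H'.verts ∧ ∀ v w, H.Adj v w → H'.Adj v w

/-- The neighborhood `ν_G(H)` of the subgraph `H` of `G`: its vertices are the vertices of `G`
adjacent to some vertex of `H`, and its edges are the edges of `G` with at least one endpoint
in `H`. -/
def gnbhd {V : Type*} (G : LGraph V) (H : Subgraph G) : Subgraph G where
  verts := {v | ∃ w ∈ H.verts, G.Adj v w}
  Adj v w := G.Adj v w ∧ (v ∈ H.verts ∨ w ∈ H.verts)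
  adj_sub := fun _ _ h => h.1
  symm := fun _ _ h => ⟨G.symm _ _ h.1, h.2.symm⟩

/-- The iterated neighborhood `ν^r_G(H)` (with `ν^0_G(H) = H`). -/
def gnbhdIter {V : Type*} (G : LGraph V) (H : Subgraph G) : ℕ → Subgraph G
  | 0 => H
  | r + 1 => gnbhd G (gnbhdIter G H r)
/-- A subgraph of `G` regarded as a graph in its own right (on its vertex set). -/
def Subgraph.coe {V : Type*} {G : LGraph V} (H : Subgraph G) : LGraph H.verts where
  Adj x y := H.Adj x y
  symm := fun x y h => H.symm _ _ h

/-- `(G, H)` is an `r`-NDR pair of graphs: there is a subgraph `H'` of `G` containing `H` and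
`ν^r_G(H)` such that `H` is a ×-homotopy deformation retract of `H'`. -/
def GraphNDRPair {V : Type*} (G : LGraph V) (H : Subgraph G) (r : ℕ) : Prop :=
  ∃ H' : Subgraph G, Subgraph.le H H' ∧ Subgraph.le (gnbhdIter G H r) H' ∧
    IsXDefRetract H'.coe {x : H'.verts | (x : V) ∈ H.verts}
/-- `ρ` is a right action of the group `Γ` on the graph `T` by graph automorphisms. -/
def IsRightGraphAction (Γ : Type*) [Group Γ] {VT : Type*} (T : LGraph VT)
    (ρ : Γ → VT → VT) : Prop :=
  (∀ x, ρ 1 x = x) ∧ (∀ γ γ' : Γ, ∀ x, ρ (γ * γ') x = ρ γ' (ρ γ x)) ∧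
    ∀ γ : Γ, IsGraphHom T T (ρ γ)

/-- The orbit relation generating the quotient `Γ\(T × A(K))`: `γ·(x, v) = (xγ⁻¹, γv)`. -/
def ATrel {Γ VT VK : Type*} [Group Γ] (ρ : Γ → VT → VT) (a : Γ → VK → VK)
    (p q : VT × VK) : Prop :=
  ∃ γ : Γ, q = (ρ γ⁻¹ p.1, a γ p.2)

/-- The graph `A_T(K) = Γ\(T × A(K))`: the vertices are the Γ-orbits of pairs of a vertex of
`T` and a vertex of `K`, and two orbits are adjacent iff they contain adjacent
representatives, a pair `(x, v)`, `(y, w)` being adjacent in `T × A(K)` iff `x`, `y` are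
adjacent in `T` and `{v, w}` is a simplex of `K`. -/
def ATgraph {Γ VT VK : Type*} [Group Γ] (T : LGraph VT) (ρ : Γ → VT → VT)
    (K : Cplx VK) (a : Γ → VK → VK) : LGraph (Quot (ATrel ρ a)) where
  Adj c d := ∃ p q : VT × VK, Quot.mk (ATrel ρ a) p = c ∧ Quot.mk (ATrel ρ a) q = d ∧
    T.Adj p.1 q.1 ∧ ({p.2, q.2} : Set VK) ∈ K.faces
  symm := by
    rintro c d ⟨p, q, hp, hq, hT, hK⟩
    exact ⟨q, p, hq, hp, T.symm _ _ hT, by rwa [Set.pair_comm]⟩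

/-- The vertex set of `A_T(L)` inside `A_T(K)` (for a subcomplex `L` of `K`): the orbits of
pairs whose second component is a vertex of `L`. -/
def ATverts {Γ VT VK : Type*} [Group Γ] (ρ : Γ → VT → VT) (a : Γ → VK → VK)
    (L : Cplx VK) : Set (Quot (ATrel ρ a)) :=
  {c | ∃ p : VT × VK, Quot.mk (ATrel ρ a) p = c ∧ p.2 ∈ L.verts}
theorem nbhdIter_faces_subset {V : Type*} {K L : Cplx V} (hLK : L.faces ⊆ K.faces) :
    ∀ r : ℕ, (nbhdIter K L r).faces ⊆ K.faces
  | 0 => hLK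
  | r + 1 => fun σ hσ => by
      obtain ⟨v, -, h⟩ := hσ
      exact K.down_closed _ h _ (Set.subset_insert _ _)

/-- For a subcomplex `L` of `K`, the graph `A_T(L)` regarded as a subgraph of `A_T(K)`. -/
def ATsubgraph {Γ VT VK : Type*} [Group Γ] (T : LGraph VT) (ρ : Γ → VT → VT)
    (K : Cplx VK) (a : Γ → VK → VK) (L : Cplx VK) (hLK : L.faces ⊆ K.faces) :
    Subgraph (ATgraph T ρ K a) where
  verts := ATverts ρ a L
  Adj c d := ∃ p q : VT × VK, Quot.mk (ATrel ρ a) p = c ∧ Quot.mk (ATrel ρ a) q = d ∧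
    T.Adj p.1 q.1 ∧ ({p.2, q.2} : Set VK) ∈ L.faces
  adj_sub := by
    rintro c d ⟨p, q, hp, hq, hT, hL⟩
    exact ⟨p, q, hp, hq, hT, hLK hL⟩
  symm := by
    rintro c d ⟨p, q, hp, hq, hT, hL⟩
    exact ⟨q, p, hq, hp, T.symm _ _ hT, by rwa [Set.pair_comm]⟩

theorem sd_faces_mono {V : Type*} {K L : Cplx V} (h : L.faces ⊆ K.faces) :
    (sd L).faces ⊆ (sd K).faces :=
  fun c hc => ⟨hc.1, fun σ hσ => ⟨h (hc.2.1 σ hσ).1, (hc.2.1 σ hσ).2⟩, hc.2.2⟩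

theorem sdIter_faces_mono {V : Type u} {K L : Cplx V} (h : L.faces ⊆ K.faces) :
    ∀ r : ℕ, (sdIter L r).faces ⊆ (sdIter K r).faces
  | 0 => h
  | r + 1 => sd_faces_mono (sdIter_faces_mono h r)

/-!
In `Sd² K` the faces of `Sd K` meeting `Sd L` span a Γ-subcomplex containing `ν(Sd² L)`, and
`σ ↦ σ ∩ V(Sd L)` is an equivariant poset retraction of these faces onto the faces of `Sd L`
lying below the identity. Two comparable equivariant poset maps are joined inside `Def_Γ` by
switching from one to the other a single cardinality at a time. Such zigzags survive barycentric
subdivision (apply the maps elementwise to chains), while one more subdivision doubles the radius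
of the neighbourhood captured, because `ν²(Sd N, Sd Q) ⊆ Sd ν(N, Q)`. So `(Sd^{m+2} K, Sd^{m+2} L)`
is a simplicial `2^m`-NDR pair. Finally `η ↦ Γ\(T × η)` turns a strong Γ-collapse of `A` onto `L`
into a ×-homotopy deformation retraction of `A_T(A)` onto `A_T(L)`, and `ν^r(A_T L) ⊆ A_T(ν^r L)`.
-/

open Relation Set

def IsAction (Γ : Type*) [Group Γ] {W : Type*} (b : Γ → W → W) : Prop :=
  (∀ w, b 1 w = w) ∧ ∀ γ γ' : Γ, ∀ w, b (γ * γ') w = b γ (b γ' w)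

def Cplx.IsInvariant {Γ W : Type*} (b : Γ → W → W) (X : Cplx W) : Prop :=
  ∀ γ : Γ, ∀ σ ∈ X.faces, b γ '' σ ∈ X.faces

/-- `sd X` is definitionally `orderCplx (facePoset X)`. -/
def orderCplx {ι : Type*} (P : Set (Set ι)) : Cplx (Set ι) where
  faces := {c | c.Finite ∧ (∀ σ ∈ c, σ ∈ P) ∧ IsChain (· ⊆ ·) c}
  finite_mem _ h := h.1
  down_closed _ hc _ hdc :=
    ⟨hc.1.subset hdc, fun σ hσ => hc.2.1 σ (hdc hσ), by exact hc.2.2.mono hdc⟩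

section Complexes

variable {ι : Type*} {X Y : Cplx ι} {P P' : Set (Set ι)}

lemma Cplx.face_subset_verts {σ : Set ι} (h : σ ∈ X.faces) : σ ⊆ X.verts :=
  fun _ hv => X.down_closed σ h _ (singleton_subset_iff.mpr hv)

lemma Cplx.verts_mono (h : X.faces ⊆ Y.faces) : X.verts ⊆ Y.verts := fun _ hv => h hv

lemma orderCplx_verts (P : Set (Set ι)) : (orderCplx P).verts = P := by
  ext x
  refine ⟨fun h => h.2.1 x rfl, fun h => ⟨finite_singleton x, fun σ hσ => ?_, IsChain.singleton⟩⟩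
  rwa [mem_singleton_iff.mp hσ]

lemma sd_verts (X : Cplx ι) : (sd X).verts = facePoset X := orderCplx_verts _

lemma sd_verts_finite (h : X.verts.Finite) : (sd X).verts.Finite := by
  rw [sd_verts]
  exact h.finite_subsets.subset fun σ hσ => Cplx.face_subset_verts hσ.1

lemma orderCplx_mono (h : P ⊆ P') : (orderCplx P).faces ⊆ (orderCplx P').faces :=
  fun _ hc => ⟨hc.1, fun σ hσ => h (hc.2.1 σ hσ), hc.2.2⟩

lemma facePoset_orderCplx_mono (h : P ⊆ P') :
    facePoset (orderCplx P) ⊆ facePoset (orderCplx P') :=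
  fun _ hc => ⟨orderCplx_mono h hc.1, hc.2⟩

lemma sUnion_facePoset_orderCplx_finite (hP : (⋃₀ P).Finite) :
    (⋃₀ facePoset (orderCplx P)).Finite :=
  (hP.finite_subsets.subset fun _ hx => subset_sUnion_of_mem hx).subset
    (sUnion_subset fun _ hc => hc.1.2.1)

lemma IsChain.image_of_monotoneOn {c : Set (Set ι)} {h : Set ι → Set ι}
    (hc : IsChain (· ⊆ ·) c) (hcP : c ⊆ P) (hh : MonotoneOn h P) :
    IsChain (· ⊆ ·) (h '' c) := by
  rintro _ ⟨x, hx, rfl⟩ _ ⟨y, hy, rfl⟩ hne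
  exact (hc hx hy (ne_of_apply_ne h hne)).imp (hh (hcP hx) (hcP hy)) (hh (hcP hy) (hcP hx))

lemma image_mem_orderCplx {h : Set ι → Set ι} (hmaps : MapsTo h P P') (hmono : MonotoneOn h P)
    {c : Set (Set ι)} (hc : c ∈ (orderCplx P).faces) : h '' c ∈ (orderCplx P').faces :=
  ⟨hc.1.image h, fun _ ⟨x, hx, hxy⟩ => hxy ▸ hmaps (hc.2.1 x hx),
    hc.2.2.image_of_monotoneOn hc.2.1 hmono⟩

lemma mapsTo_image_facePoset_orderCplx {h : Set ι → Set ι} (hmaps : MapsTo h P P')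
    (hmono : MonotoneOn h P) :
    MapsTo (h '' ·) (facePoset (orderCplx P)) (facePoset (orderCplx P')) :=
  fun _ hc => ⟨image_mem_orderCplx hmaps hmono hc.1, hc.2.image h⟩

lemma isInvariant_orderCplx {Γ : Type*} {g : Γ → ι → ι}
    (h : ∀ γ, MapsTo (g γ '' ·) P P) : (orderCplx P).IsInvariant (fun γ x => g γ '' x) :=
  fun γ _ hσ => image_mem_orderCplx (h γ) (monotone_image.monotoneOn _) hσ

lemma nbhd_faces_subset (X Y : Cplx ι) : (nbhd X Y).faces ⊆ X.faces := by
  rintro σ ⟨v, -, h⟩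
  exact X.down_closed _ h _ (subset_insert _ _)

lemma nbhd_mono_right {Z : Cplx ι} (h : X.faces ⊆ Y.faces) :
    (nbhd Z X).faces ⊆ (nbhd Z Y).faces := by
  rintro σ ⟨v, hv, hσ⟩
  exact ⟨v, Cplx.verts_mono h hv, hσ⟩

lemma IsMultiMap.subset_verts {κ : Type*} {Z : Cplx κ} {η : ι → Set κ} (h : IsMultiMap X Z η)
    {v : ι} (hv : v ∈ X.verts) : η v ⊆ Z.verts :=
  Cplx.face_subset_verts (by simpa using h.2 {v} hv)

lemma IsMultiMap.pair_mem {κ : Type*} {Z : Cplx κ} {η : ι → Set κ} (h : IsMultiMap X Z η)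
    {v u : ι} {w s : κ} (hvu : {v, u} ∈ X.faces) (hw : w ∈ η v) (hs : s ∈ η u) :
    {w, s} ∈ Z.faces :=
  Z.down_closed _ (h.2 _ hvu) _ (insert_subset (mem_biUnion (mem_insert _ _) hw)
    (singleton_subset_iff.mpr (mem_biUnion (mem_insert_of_mem _ rfl) hs)))

end Complexes

section Invariance

variable {Γ W : Type*} {b : Γ → W → W} {X Y : Cplx W}

lemma IsCplxAction.isAction [Group Γ] (h : IsCplxAction Γ b X) : IsAction Γ b := ⟨h.1, h.2.1⟩

lemma IsCplxAction.isInvariant [Group Γ] (h : IsCplxAction Γ b X) : X.IsInvariant b := h.2.2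

lemma IsAction.inv_apply [Group Γ] (hb : IsAction Γ b) (γ : Γ) (w : W) : b γ⁻¹ (b γ w) = w := by
  rw [← hb.2, inv_mul_cancel, hb.1]

lemma IsAction.injective [Group Γ] (hb : IsAction Γ b) (γ : Γ) : (b γ).Injective :=
  Function.LeftInverse.injective (hb.inv_apply γ)

lemma IsAction.image [Group Γ] (hb : IsAction Γ b) : IsAction Γ (fun γ (s : Set W) => b γ '' s) :=
  ⟨fun s => by simp [hb.1], fun γ γ' s => by simp [image_image, hb.2]⟩

lemma IsAction.actIter [Group Γ] {V : Type u} {a : Γ → V → V} (ha : IsAction Γ a) :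
    ∀ n, IsAction Γ (actIter a n)
  | 0 => ha
  | n + 1 => (ha.actIter n).image

lemma Cplx.IsInvariant.verts (hX : X.IsInvariant b) (γ : Γ) {w : W} (hw : w ∈ X.verts) :
    b γ w ∈ X.verts := by
  have h := hX γ {w} hw
  rwa [image_singleton] at h

lemma Cplx.IsInvariant.preimage_verts [Group Γ] (hb : IsAction Γ b) (hX : X.IsInvariant b) (γ : Γ) :
    b γ ⁻¹' X.verts = X.verts :=
  Subset.antisymm (fun w hw => hb.inv_apply γ w ▸ hX.verts γ⁻¹ hw) fun _ hw => hX.verts γ hw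

lemma Cplx.IsInvariant.nbhd (hY : Y.IsInvariant b) (hX : X.IsInvariant b) :
    (nbhd X Y).IsInvariant b := by
  rintro γ σ ⟨v, hv, h⟩
  refine ⟨b γ v, hY.verts γ hv, ?_⟩
  rw [← image_insert_eq]
  exact hX γ _ h

lemma Cplx.IsInvariant.nbhdIter (hY : Y.IsInvariant b) (hX : X.IsInvariant b) :
    ∀ n, (nbhdIter X Y n).IsInvariant b
  | 0 => hY
  | n + 1 => (hY.nbhdIter hX n).nbhd hX

lemma Cplx.IsInvariant.sd (hX : X.IsInvariant b) : (sd X).IsInvariant (fun γ s => b γ '' s) :=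
  isInvariant_orderCplx fun γ _ hσ => ⟨hX γ _ hσ.1, hσ.2.image _⟩

lemma Cplx.IsInvariant.sdIter {V : Type u} {a : Γ → V → V} {K : Cplx V} (hK : K.IsInvariant a) :
    ∀ n, (sdIter K n).IsInvariant (actIter a n)
  | 0 => hK
  | n + 1 => (hK.sdIter n).sd

end Invariance

section PosetMaps

variable {Γ ι : Type*} {g : Γ → ι → ι} {P B : Set (Set ι)} {α β : Set ι → Set ι}

variable (g P B) in
/-- The poset-level analogue of an element of `Def_Γ(Δ(P), Δ(B))`. -/
structure IsDefPosetMap (f : Set ι → Set ι) : Prop where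
  mapsTo : MapsTo f P P
  monotoneOn : MonotoneOn f P
  equivariant : ∀ γ : Γ, ∀ x ∈ P, f (g γ '' x) = g γ '' f x
  fixes : ∀ x ∈ B, f x = x

variable (P) in
def CrossComparable (α β : Set ι → Set ι) : Prop :=
  ∀ x ∈ P, ∀ y ∈ P, x ⊆ y → (α x ⊆ β y ∨ β y ⊆ α x) ∧ (β x ⊆ α y ∨ α y ⊆ β x)

variable (g P B) in
/-- Cross-comparability is what makes `v ↦ {α v, β v}` a multi-map of `Δ(P)`, so that `α` and
`β` are joined in `Def_Γ(Δ(P), Δ(B))` through it. -/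
def posetDefStep (α β : Set ι → Set ι) : Prop :=
  IsDefPosetMap g P B α ∧ IsDefPosetMap g P B β ∧ CrossComparable P α β

lemma IsDefPosetMap.id : IsDefPosetMap g P B id :=
  ⟨mapsTo_id _, monotoneOn_id, fun _ _ _ => rfl, fun _ _ => rfl⟩

lemma CrossComparable.isChain_image_union (h : CrossComparable P α β) (hα : MonotoneOn α P)
    (hβ : MonotoneOn β P) {c : Set (Set ι)} (hc : IsChain (· ⊆ ·) c) (hcP : c ⊆ P) :
    IsChain (· ⊆ ·) (α '' c ∪ β '' c) := by
  refine isChain_union.2 ⟨hc.image_of_monotoneOn hcP hα, hc.image_of_monotoneOn hcP hβ, ?_⟩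
  rintro _ ⟨x, hx, rfl⟩ _ ⟨y, hy, rfl⟩ -
  rcases hc.total hx hy with hxy | hyx
  · exact (h x (hcP hx) y (hcP hy) hxy).1
  · exact (h y (hcP hy) x (hcP hx) hyx).2.symm

lemma posetDefStep.symm (h : posetDefStep g P B α β) : posetDefStep g P B β α :=
  ⟨h.2.1, h.1, fun x hx y hy hxy => (h.2.2 x hx y hy hxy).symm⟩

lemma posetDefStep_of_eqOn (hα : IsDefPosetMap g P B α) (hβ : IsDefPosetMap g P B β)
    (h : EqOn α β P) : posetDefStep g P B α β := by
  refine ⟨hα, hβ, fun x hx y hy hxy => ?_⟩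
  have hle := hβ.monotoneOn hx hy hxy
  rw [h hx, h hy]
  exact ⟨.inl hle, .inl hle⟩

def thresholdMap (α β : Set ι → Set ι) (j : ℕ) (x : Set ι) : Set ι :=
  if x.ncard < j then α x else β x

lemma subset_thresholdMap (hα : IsDefPosetMap g P B α) (hle : ∀ x ∈ P, α x ⊆ β x) (j : ℕ)
    {x y : Set ι} (hx : x ∈ P) (hy : y ∈ P) (hxy : x ⊆ y) : α x ⊆ thresholdMap α β j y := by
  unfold thresholdMap
  split_ifs
  exacts [hα.monotoneOn hx hy hxy, (hα.monotoneOn hx hy hxy).trans (hle y hy)]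

lemma thresholdMap_subset (hβ : IsDefPosetMap g P B β) (hle : ∀ x ∈ P, α x ⊆ β x) (j : ℕ)
    {x y : Set ι} (hx : x ∈ P) (hy : y ∈ P) (hxy : x ⊆ y) : thresholdMap α β j x ⊆ β y := by
  unfold thresholdMap
  split_ifs
  exacts [(hle x hx).trans (hβ.monotoneOn hx hy hxy), hβ.monotoneOn hx hy hxy]

lemma isDefPosetMap_thresholdMap (hg : ∀ γ, (g γ).Injective) (hfin : ∀ x ∈ P, x.Finite)
    (hα : IsDefPosetMap g P B α) (hβ : IsDefPosetMap g P B β) (hle : ∀ x ∈ P, α x ⊆ β x)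
    (j : ℕ) : IsDefPosetMap g P B (thresholdMap α β j) where
  mapsTo x hx := by
    unfold thresholdMap
    split_ifs
    exacts [hα.mapsTo hx, hβ.mapsTo hx]
  monotoneOn x hx y hy hxy := by
    by_cases hxj : x.ncard < j
    · rw [thresholdMap, if_pos hxj]
      exact subset_thresholdMap hα hle j hx hy hxy
    · have hyj : ¬ y.ncard < j := fun h => hxj ((ncard_le_ncard hxy (hfin y hy)).trans_lt h)
      rw [thresholdMap, thresholdMap, if_neg hxj, if_neg hyj]
      exact hβ.monotoneOn hx hy hxy
  equivariant γ x hx := by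
    simp only [thresholdMap, ncard_image_of_injective x (hg γ)]
    split_ifs
    exacts [hα.equivariant γ x hx, hβ.equivariant γ x hx]
  fixes x hx := by
    unfold thresholdMap
    split_ifs
    exacts [hα.fixes x hx, hβ.fixes x hx]

/-- Raising the threshold by one only changes the map on sets of cardinality `j`, which are
pairwise incomparable. -/
lemma posetDefStep_thresholdMap_succ (hg : ∀ γ, (g γ).Injective) (hfin : ∀ x ∈ P, x.Finite)
    (hα : IsDefPosetMap g P B α) (hβ : IsDefPosetMap g P B β) (hle : ∀ x ∈ P, α x ⊆ β x)
    (j : ℕ) : posetDefStep g P B (thresholdMap α β j) (thresholdMap α β (j + 1)) := by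
  refine ⟨isDefPosetMap_thresholdMap hg hfin hα hβ hle j,
    isDefPosetMap_thresholdMap hg hfin hα hβ hle (j + 1), fun x hx y hy hxy => ⟨?_, ?_⟩⟩
  · by_cases hyj : y.ncard < j + 1
    · by_cases hxj : x.ncard < j
      · rw [thresholdMap, if_pos hxj]
        exact .inl (subset_thresholdMap hα hle _ hx hy hxy)
      · obtain rfl : x = y := eq_of_subset_of_ncard_le hxy (by omega) (hfin y hy)
        rw [thresholdMap, thresholdMap, if_neg hxj, if_pos hyj]
        exact .inr (hle x hx)
    · rw [show thresholdMap α β (j + 1) y = β y from if_neg hyj]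
      exact .inl (thresholdMap_subset hβ hle j hx hy hxy)
  · by_cases hxj : x.ncard < j + 1
    · rw [thresholdMap, if_pos hxj]
      exact .inl (subset_thresholdMap hα hle _ hx hy hxy)
    · have hyj : ¬ y.ncard < j := fun h => hxj (by linarith [ncard_le_ncard hxy (hfin y hy)])
      rw [show thresholdMap α β j y = β y from if_neg hyj]
      exact .inl (thresholdMap_subset hβ hle _ hx hy hxy)

theorem reflTransGen_posetDefStep_of_le (hg : ∀ γ, (g γ).Injective) (hP : (⋃₀ P).Finite)
    (hα : IsDefPosetMap g P B α) (hβ : IsDefPosetMap g P B β) (hle : ∀ x ∈ P, α x ⊆ β x) :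
    ReflTransGen (posetDefStep g P B) β α := by
  have hfin : ∀ x ∈ P, x.Finite := fun x hx => hP.subset (subset_sUnion_of_mem hx)
  have hladder : ∀ j, ReflTransGen (posetDefStep g P B) β (thresholdMap α β j) := by
    intro j
    induction j with
    | zero => rw [show thresholdMap α β 0 = β from funext fun x => if_neg x.ncard.not_lt_zero]
    | succ j ih => exact ih.tail (posetDefStep_thresholdMap_succ hg hfin hα hβ hle j)
  have htop : EqOn (thresholdMap α β ((⋃₀ P).ncard + 1)) α P := fun x hx =>
    if_pos (Nat.lt_succ_of_le (ncard_le_ncard (subset_sUnion_of_mem hx) hP))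
  exact (hladder _).tail
    (posetDefStep_of_eqOn (isDefPosetMap_thresholdMap hg hfin hα hβ hle _) hα htop)

end PosetMaps

section Subdivision

variable {Γ ι : Type*} {g : Γ → ι → ι} {P B : Set (Set ι)} {α β f : Set ι → Set ι}

lemma IsDefPosetMap.image (hf : IsDefPosetMap g P B f) :
    IsDefPosetMap (fun γ x => g γ '' x) (facePoset (orderCplx P)) (facePoset (orderCplx B))
      (f '' ·) where
  mapsTo := mapsTo_image_facePoset_orderCplx hf.mapsTo hf.monotoneOn
  monotoneOn _ _ _ _ hcd := image_mono hcd
  equivariant γ c hc := by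
    simp only [image_image]
    exact image_congr fun x hx => hf.equivariant γ x (hc.1.2.1 x hx)
  fixes c hc := (image_congr fun x hx => hf.fixes x (hc.1.2.1 x hx)).trans (image_id c)

lemma IsDefPosetMap.image_union (hα : IsDefPosetMap g P B α) (hβ : IsDefPosetMap g P B β)
    (hαβ : CrossComparable P α β) :
    IsDefPosetMap (fun γ x => g γ '' x) (facePoset (orderCplx P)) (facePoset (orderCplx B))
      (fun c => α '' c ∪ β '' c) where
  mapsTo c hc := by
    refine ⟨⟨(hc.1.1.image α).union (hc.1.1.image β), ?_,
      hαβ.isChain_image_union hα.monotoneOn hβ.monotoneOn hc.1.2.2 hc.1.2.1⟩,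
      (hc.2.image α).inl⟩
    rintro _ (⟨x, hx, rfl⟩ | ⟨x, hx, rfl⟩)
    exacts [hα.mapsTo (hc.1.2.1 x hx), hβ.mapsTo (hc.1.2.1 x hx)]
  monotoneOn _ _ _ _ hcd := union_subset_union (image_mono hcd) (image_mono hcd)
  equivariant γ c hc := by
    rw [Set.image_union]
    exact congrArg₂ (· ∪ ·) (hα.image.equivariant γ c hc) (hβ.image.equivariant γ c hc)
  fixes c hc := by
    rw [show α '' c = c from hα.image.fixes c hc, show β '' c = c from hβ.image.fixes c hc,
      union_self]

/-- On chains, `α '' ·` and `β '' ·` are both below `c ↦ α '' c ∪ β '' c`. -/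
lemma posetDefStep.image (hg : ∀ γ, (g γ).Injective) (hP : (⋃₀ P).Finite)
    (h : posetDefStep g P B α β) :
    ReflTransGen (posetDefStep (fun γ x => g γ '' x) (facePoset (orderCplx P))
      (facePoset (orderCplx B))) (α '' ·) (β '' ·) := by
  obtain ⟨hα, hβ, hαβ⟩ := h
  have hunion := hα.image_union hβ hαβ
  have hg' : ∀ γ, (g γ '' · : Set ι → Set ι).Injective := fun γ => image_injective.2 (hg γ)
  have hP' := sUnion_facePoset_orderCplx_finite hP
  have hα' := reflTransGen_posetDefStep_of_le hg' hP' hα.image hunion fun _ _ => subset_union_left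
  have hβ' := reflTransGen_posetDefStep_of_le hg' hP' hβ.image hunion fun _ _ => subset_union_right
  exact (ReflTransGen.mono (fun _ _ => posetDefStep.symm) _ _ hα'.swap).trans hβ'

lemma Relation.ReflTransGen.image_posetDefStep (hg : ∀ γ, (g γ).Injective) (hP : (⋃₀ P).Finite)
    (h : ReflTransGen (posetDefStep g P B) α β) :
    ReflTransGen (posetDefStep (fun γ x => g γ '' x) (facePoset (orderCplx P))
      (facePoset (orderCplx B))) (α '' ·) (β '' ·) :=
  ReflTransGen.lift' (fun φ c => φ '' c)
    (fun _ _ (hst : posetDefStep g P B _ _) => hst.image hg hP) _ _ h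

end Subdivision

section Collapse

variable {Γ ι : Type*} {g : Γ → ι → ι} {P B : Set (Set ι)} {α β f : Set ι → Set ι}

lemma biUnion_pair_eq_image_union (σ : Set (Set ι)) :
    (⋃ v ∈ σ, ({α v, β v} : Set (Set ι))) = α '' σ ∪ β '' σ := by
  ext x
  simp only [mem_iUnion, mem_insert_iff, mem_singleton_iff, mem_union, mem_image, exists_prop]
  grind

lemma posetDefStep.isDefMultiMap [Group Γ] (h : posetDefStep g P B α β) :
    IsDefMultiMap Γ (fun γ x => g γ '' x) (orderCplx P) (orderCplx B) (fun v => {α v, β v}) := by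
  obtain ⟨hα, hβ, hαβ⟩ := h
  refine ⟨⟨⟨fun v _ => insert_nonempty _ _, fun σ hσ => ?_⟩, fun γ v hv => ?_⟩, fun v hv => ?_⟩
  · rw [biUnion_pair_eq_image_union]
    refine ⟨(hσ.1.image α).union (hσ.1.image β), ?_,
      hαβ.isChain_image_union hα.monotoneOn hβ.monotoneOn hσ.2.2 hσ.2.1⟩
    rintro _ (⟨x, hx, rfl⟩ | ⟨x, hx, rfl⟩)
    exacts [hα.mapsTo (hσ.2.1 x hx), hβ.mapsTo (hσ.2.1 x hx)]
  · rw [orderCplx_verts] at hv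
    dsimp only
    rw [image_pair, hα.equivariant γ v hv, hβ.equivariant γ v hv]
  · rw [orderCplx_verts] at hv
    dsimp only
    rw [hα.fixes v hv, hβ.fixes v hv, pair_eq_singleton]

lemma IsDefPosetMap.isDefMultiMap [Group Γ] (hf : IsDefPosetMap g P B f) :
    IsDefMultiMap Γ (fun γ x => g γ '' x) (orderCplx P) (orderCplx B) (fun v => {f v}) := by
  simpa only [pair_eq_singleton] using (posetDefStep_of_eqOn hf hf (eqOn_refl f P)).isDefMultiMap

theorem cplxCollapses_orderCplx [Group Γ] (hf : IsDefPosetMap g P B f) (hfB : MapsTo f P B)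
    (h : ReflTransGen (posetDefStep g P B) id f) :
    CplxCollapses Γ (fun γ x => g γ '' x) (orderCplx P) (orderCplx B) := by
  refine ⟨f, hf.isDefMultiMap, ?_, fun σ hσ => image_mem_orderCplx hfB hf.monotoneOn hσ⟩
  refine ReflTransGen.lift' (fun φ v => ({φ v} : Set (Set ι)))
    (fun α β (hst : posetDefStep g P B α β) => ?_) _ _ h
  have hmid := hst.isDefMultiMap
  exact .head ⟨hst.1.isDefMultiMap, hmid, .inl fun v _ => by simp⟩
    (.single ⟨hmid, hst.2.1.isDefMultiMap, .inr fun v _ => by simp⟩)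

end Collapse

section Neighbourhoods

variable {ι : Type*} {X Y : Cplx ι} {Γ : Type*} {g : Γ → ι → ι}

def facesMeeting (X Y : Cplx ι) : Set (Set ι) := {σ | σ ∈ facePoset X ∧ (σ ∩ Y.verts).Nonempty}

lemma facePoset_subset_facesMeeting (h : Y.faces ⊆ X.faces) : facePoset Y ⊆ facesMeeting X Y :=
  fun σ hσ => ⟨⟨h hσ.1, hσ.2⟩, by
    rw [inter_eq_self_of_subset_left (Cplx.face_subset_verts hσ.1)]
    exact hσ.2⟩

lemma mapsTo_image_facesMeeting (hX : X.IsInvariant g) (hY : ∀ γ, g γ ⁻¹' Y.verts = Y.verts)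
    (γ : Γ) : MapsTo (g γ '' ·) (facesMeeting X Y) (facesMeeting X Y) := by
  refine fun σ hσ => ⟨⟨hX γ σ hσ.1.1, hσ.1.2.image _⟩, ?_⟩
  rw [← image_inter_preimage, hY γ]
  exact hσ.2.image _

lemma isDefPosetMap_inter_verts (hY : ∀ γ, g γ ⁻¹' Y.verts = Y.verts) :
    IsDefPosetMap g (facesMeeting X Y) (facePoset Y) (· ∩ Y.verts) where
  mapsTo σ hσ := ⟨⟨X.down_closed σ hσ.1.1 _ inter_subset_left, hσ.2⟩, by
    rw [inter_assoc, inter_self]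
    exact hσ.2⟩
  monotoneOn _ _ _ _ h := inter_subset_inter_left _ h
  equivariant γ _ _ := by rw [← image_inter_preimage, hY γ]
  fixes σ hσ := inter_eq_self_of_subset_left (Cplx.face_subset_verts hσ.1)

lemma mapsTo_inter_verts (hfull : ∀ σ ∈ X.faces, σ ⊆ Y.verts → σ ∈ Y.faces) :
    MapsTo (· ∩ Y.verts) (facesMeeting X Y) (facePoset Y) :=
  fun _ hσ => ⟨hfull _ (X.down_closed _ hσ.1.1 _ inter_subset_left) inter_subset_right, hσ.2⟩

lemma sd_full (X Y : Cplx ι) : ∀ c ∈ (sd X).faces, c ⊆ (sd Y).verts → c ∈ (sd Y).faces :=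
  fun _ hc hcY => ⟨hc.1, by rwa [← sd_verts], hc.2.2⟩

lemma nbhd_sd_subset (N Q : Cplx ι) :
    (nbhd (sd N) (sd Q)).faces ⊆ (orderCplx (facesMeeting N Q)).faces := by
  rintro D ⟨c, hc, hD⟩
  rw [sd_verts] at hc
  refine ⟨hD.1.subset (subset_insert _ _), fun σ hσ => ⟨hD.2.1 σ (mem_insert_of_mem _ hσ), ?_⟩,
    hD.2.2.mono (subset_insert _ _)⟩
  rcases hD.2.2.total (mem_insert_of_mem _ hσ) (mem_insert _ _) with h | h
  · obtain ⟨v, hv⟩ := (hD.2.1 σ (mem_insert_of_mem _ hσ)).2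
    exact ⟨v, hv, Cplx.face_subset_verts hc.1 (h hv)⟩
  · obtain ⟨v, hv⟩ := hc.2
    exact ⟨v, h hv, Cplx.face_subset_verts hc.1 hv⟩

/-- A vertex of `ν(Sd N, Sd Q)` is a face of `N` meeting `Q`, so it joins every face of `N`
comparable to it to a vertex of `Q`. -/
lemma nbhd_nbhd_sd_subset (N Q : Cplx ι) :
    (nbhd (sd N) (nbhd (sd N) (sd Q))).faces ⊆ (sd (nbhd N Q)).faces := by
  rintro D ⟨c, hc, hD⟩
  have hcm : c ∈ facesMeeting N Q := by
    rw [← orderCplx_verts (facesMeeting N Q)]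
    exact Cplx.verts_mono (nbhd_sd_subset N Q) hc
  obtain ⟨⟨hcN, -⟩, v, hvc, hvQ⟩ := hcm
  refine ⟨hD.1.subset (subset_insert _ _), fun σ hσ => ⟨⟨v, hvQ, ?_⟩,
    (hD.2.1 σ (mem_insert_of_mem _ hσ)).2⟩, hD.2.2.mono (subset_insert _ _)⟩
  rcases hD.2.2.total (mem_insert_of_mem _ hσ) (mem_insert _ _) with h | h
  · exact N.down_closed c hcN _ (insert_subset hvc h)
  · rw [insert_eq_of_mem (h hvc)]
    exact (hD.2.1 σ (mem_insert_of_mem _ hσ)).1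

lemma nbhdIter_sd_subset (N Q : Cplx ι) :
    ∀ t, (nbhdIter (sd N) (sd Q) (2 * t)).faces ⊆ (sd (nbhdIter N Q t)).faces
  | 0 => subset_rfl
  | t + 1 => (nbhd_mono_right (nbhd_mono_right (nbhdIter_sd_subset N Q t))).trans
      (nbhd_nbhd_sd_subset N (nbhdIter N Q t))

end Neighbourhoods

section Levels

variable {V : Type u} (K L : Cplx V)

/-- The faces of `Sd^{m+1} K` spanning the Γ-subcomplex of `Sd^{m+2} K` that collapses onto
`Sd^{m+2} L`. -/
def nbhdPoset : (m : ℕ) → Set (Set (IterT V (m + 1)))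
  | 0 => facesMeeting (sdIter K 1) (sdIter L 1)
  | m + 1 => facePoset (orderCplx (nbhdPoset m))

def nbhdRetraction : (m : ℕ) → Set (IterT V (m + 1)) → Set (IterT V (m + 1))
  | 0 => (· ∩ (sdIter L 1).verts)
  | m + 1 => (nbhdRetraction m '' ·)

lemma nbhdPoset_subset : ∀ m, nbhdPoset K L m ⊆ facePoset (sdIter K (m + 1))
  | 0 => fun _ h => h.1
  | m + 1 => facePoset_orderCplx_mono (nbhdPoset_subset m)

variable {K L}

lemma facePoset_subset_nbhdPoset (hLK : L.faces ⊆ K.faces) :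
    ∀ m, facePoset (sdIter L (m + 1)) ⊆ nbhdPoset K L m
  | 0 => facePoset_subset_facesMeeting (sd_faces_mono hLK)
  | m + 1 => facePoset_orderCplx_mono (facePoset_subset_nbhdPoset hLK m)

lemma sdIter_verts_finite (hK : K.verts.Finite) : ∀ n, (sdIter K n).verts.Finite
  | 0 => hK
  | n + 1 => sd_verts_finite (sdIter_verts_finite hK n)

lemma sUnion_nbhdPoset_finite (hK : K.verts.Finite) (m : ℕ) : (⋃₀ nbhdPoset K L m).Finite :=
  (sdIter_verts_finite hK (m + 1)).subset
    (sUnion_subset fun _ hσ => Cplx.face_subset_verts (nbhdPoset_subset K L m hσ).1)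

variable {Γ : Type*} [Group Γ] {a : Γ → V → V}

lemma mapsTo_image_nbhdPoset (ha : IsCplxAction Γ a K) (hL : L.IsInvariant a) :
    ∀ m γ, MapsTo (actIter a (m + 1) γ '' ·) (nbhdPoset K L m) (nbhdPoset K L m)
  | 0, γ => mapsTo_image_facesMeeting (ha.isInvariant.sdIter 1)
      ((hL.sdIter 1).preimage_verts (ha.isAction.actIter 1)) γ
  | m + 1, γ => mapsTo_image_facePoset_orderCplx (mapsTo_image_nbhdPoset ha hL m γ)
      (monotone_image.monotoneOn _)

lemma isDefPosetMap_retraction (ha : IsAction Γ a) (hL : L.IsInvariant a) :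
    ∀ m, IsDefPosetMap (actIter a (m + 1)) (nbhdPoset K L m) (facePoset (sdIter L (m + 1)))
      (nbhdRetraction L m)
  | 0 => isDefPosetMap_inter_verts ((hL.sdIter 1).preimage_verts (ha.actIter 1))
  | m + 1 => (isDefPosetMap_retraction ha hL m).image

lemma mapsTo_retraction (ha : IsAction Γ a) (hL : L.IsInvariant a) :
    ∀ m, MapsTo (nbhdRetraction L m) (nbhdPoset K L m) (facePoset (sdIter L (m + 1)))
  | 0 => mapsTo_inter_verts (sd_full K L)
  | m + 1 => mapsTo_image_facePoset_orderCplx (mapsTo_retraction ha hL m)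
      (isDefPosetMap_retraction ha hL m).monotoneOn

lemma reflTransGen_retraction (ha : IsAction Γ a) (hL : L.IsInvariant a) (hK : K.verts.Finite) :
    ∀ m, ReflTransGen (posetDefStep (actIter a (m + 1)) (nbhdPoset K L m)
      (facePoset (sdIter L (m + 1)))) id (nbhdRetraction L m)
  | 0 => reflTransGen_posetDefStep_of_le (ha.actIter 1).injective
      (sUnion_nbhdPoset_finite hK 0) (isDefPosetMap_retraction ha hL 0) .id
      fun _ _ => inter_subset_left
  | m + 1 => by
    have h := (reflTransGen_retraction ha hL hK m).image_posetDefStep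
      (ha.actIter (m + 1)).injective (sUnion_nbhdPoset_finite hK m)
    simp only [image_id] at h
    exact h

lemma nbhdIter_subset_orderCplx_nbhdPoset : ∀ m,
    (nbhdIter (sdIter K (m + 2)) (sdIter L (m + 2)) (2 ^ m)).faces ⊆
      (orderCplx (nbhdPoset K L m)).faces
  | 0 => nbhd_sd_subset (sdIter K 1) (sdIter L 1)
  | m + 1 => by
    rw [pow_succ']
    exact (nbhdIter_sd_subset _ _ (2 ^ m)).trans
      (sd_faces_mono (nbhdIter_subset_orderCplx_nbhdPoset m))

theorem isNDRPair_sdIter (ha : IsCplxAction Γ a K) (hL : L.IsInvariant a) (hK : K.verts.Finite)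
    (hLK : L.faces ⊆ K.faces) (m : ℕ) :
    IsNDRPair Γ (actIter a (m + 2)) (sdIter K (m + 2)) (sdIter L (m + 2)) (2 ^ m) :=
  ⟨orderCplx (nbhdPoset K L m), orderCplx_mono (nbhdPoset_subset K L m),
    orderCplx_mono (facePoset_subset_nbhdPoset hLK m),
    isInvariant_orderCplx (mapsTo_image_nbhdPoset ha hL m),
    nbhdIter_subset_orderCplx_nbhdPoset m,
    cplxCollapses_orderCplx (isDefPosetMap_retraction ha.isAction hL m)
      (mapsTo_retraction ha.isAction hL m) (reflTransGen_retraction ha.isAction hL hK m)⟩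

end Levels

section Graphs

variable {Γ VT W : Type*} [Group Γ] {T : LGraph VT} {ρ : Γ → VT → VT} {b : Γ → W → W}
  {K A L X Y : Cplx W}

lemma Subgraph.le_refl {V : Type*} {G : LGraph V} (H : Subgraph G) : Subgraph.le H H :=
  ⟨subset_rfl, fun _ _ h => h⟩

lemma Subgraph.le.trans {V : Type*} {G : LGraph V} {H₁ H₂ H₃ : Subgraph G}
    (h₁₂ : Subgraph.le H₁ H₂) (h₂₃ : Subgraph.le H₂ H₃) : Subgraph.le H₁ H₃ :=
  ⟨h₁₂.1.trans h₂₃.1, fun v w h => h₂₃.2 v w (h₁₂.2 v w h)⟩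

lemma gnbhd_mono {V : Type*} {G : LGraph V} {H₁ H₂ : Subgraph G} (h : Subgraph.le H₁ H₂) :
    Subgraph.le (gnbhd G H₁) (gnbhd G H₂) :=
  ⟨fun _ ⟨w, hw, hadj⟩ => ⟨w, h.1 hw, hadj⟩,
    fun _ _ ⟨hadj, hor⟩ => ⟨hadj, hor.imp (fun hv => h.1 hv) fun hw => h.1 hw⟩⟩

lemma ATrel_equivalence (hT : IsRightGraphAction Γ T ρ) (hb : IsAction Γ b) :
    Equivalence (ATrel ρ b) where
  refl p := ⟨1, by rw [inv_one, hT.1, hb.1]⟩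
  symm := by
    rintro p _ ⟨γ, rfl⟩
    refine ⟨γ⁻¹, ?_⟩
    rw [← hT.2.1, inv_inv, inv_mul_cancel, hT.1, hb.inv_apply]
  trans := by
    rintro p _ _ ⟨γ, rfl⟩ ⟨δ, rfl⟩
    exact ⟨δ * γ, by rw [mul_inv_rev, hT.2.1, hb.2]⟩

lemma ATrel_of_mk_eq (hrel : Equivalence (ATrel ρ b)) {p q : VT × W}
    (h : Quot.mk (ATrel ρ b) p = Quot.mk _ q) : ATrel ρ b p q :=
  hrel.eqvGen_iff.mp (Quot.eqvGen_exact h)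

lemma snd_mem_verts_of_mk_eq (hrel : Equivalence (ATrel ρ b)) (hX : X.IsInvariant b)
    {p q : VT × W} (h : Quot.mk (ATrel ρ b) p = Quot.mk _ q) (hq : q.2 ∈ X.verts) :
    p.2 ∈ X.verts := by
  obtain ⟨γ, rfl⟩ := ATrel_of_mk_eq hrel h.symm
  exact hX.verts γ hq

lemma ATsubgraph_mono (hXK : X.faces ⊆ K.faces) (hYK : Y.faces ⊆ K.faces)
    (h : X.faces ⊆ Y.faces) :
    Subgraph.le (ATsubgraph T ρ K b X hXK) (ATsubgraph T ρ K b Y hYK) :=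
  ⟨fun _ ⟨p, hp, hpX⟩ => ⟨p, hp, Cplx.verts_mono h hpX⟩,
    fun _ _ ⟨p, q, hp, hq, hpq, hpqX⟩ => ⟨p, q, hp, hq, hpq, h hpqX⟩⟩

lemma gnbhd_ATsubgraph_le (hrel : Equivalence (ATrel ρ b)) (hX : X.IsInvariant b)
    (hXK : X.faces ⊆ K.faces) :
    Subgraph.le (gnbhd (ATgraph T ρ K b) (ATsubgraph T ρ K b X hXK))
      (ATsubgraph T ρ K b (nbhd K X) (nbhd_faces_subset K X)) := by
  constructor
  · rintro _ ⟨_, ⟨q', hq', hq'X⟩, p, q, rfl, rfl, -, hpq⟩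
    refine ⟨p, rfl, q.2, snd_mem_verts_of_mk_eq hrel hX hq'.symm hq'X, ?_⟩
    rwa [pair_comm] at hpq
  · rintro _ _ ⟨⟨p, q, rfl, rfl, hTpq, hpq⟩, ⟨p', hp', hp'X⟩ | ⟨q', hq', hq'X⟩⟩
    · refine ⟨p, q, rfl, rfl, hTpq, p.2, snd_mem_verts_of_mk_eq hrel hX hp'.symm hp'X, ?_⟩
      rwa [insert_eq_of_mem (mem_insert _ _)]
    · refine ⟨p, q, rfl, rfl, hTpq, q.2, snd_mem_verts_of_mk_eq hrel hX hq'.symm hq'X, ?_⟩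
      rwa [insert_eq_of_mem (mem_insert_of_mem _ (mem_singleton _))]

lemma gnbhdIter_ATsubgraph_le (hrel : Equivalence (ATrel ρ b)) (hK : K.IsInvariant b)
    (hX : X.IsInvariant b) (hXK : X.faces ⊆ K.faces) :
    ∀ n, Subgraph.le (gnbhdIter (ATgraph T ρ K b) (ATsubgraph T ρ K b X hXK) n)
      (ATsubgraph T ρ K b (nbhdIter K X n) (nbhdIter_faces_subset hXK n))
  | 0 => Subgraph.le_refl _
  | n + 1 => (gnbhd_mono (gnbhdIter_ATsubgraph_le hrel hK hX hXK n)).trans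
      (gnbhd_ATsubgraph_le hrel (hX.nbhdIter hK n) _)

variable (ρ b) in
/-- The multi-map `Γ\(T × η)` of `A_T(K)` induced by a multi-map `η` of `K`. -/
def ATmultiMap (η : W → Set W) (c : Quot (ATrel ρ b)) : Set (Quot (ATrel ρ b)) :=
  {d | ∃ p : VT × W, Quot.mk _ p = c ∧ ∃ w ∈ η p.2, Quot.mk _ (p.1, w) = d}

lemma ATmultiMap_singleton (c : Quot (ATrel ρ b)) : ATmultiMap ρ b (fun v => {v}) c = {c} := by
  ext d
  constructor
  · rintro ⟨p, rfl, _, rfl, rfl⟩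
    rfl
  · rintro rfl
    obtain ⟨p, rfl⟩ := Quot.exists_rep d
    exact ⟨p, rfl, p.2, rfl, rfl⟩

lemma ATmultiMap_mk (hrel : Equivalence (ATrel ρ b)) {η : W → Set W}
    (hη : ∀ γ : Γ, ∀ v ∈ A.verts, η (b γ v) = b γ '' η v) {p : VT × W} (hp : p.2 ∈ A.verts) :
    ATmultiMap ρ b η (Quot.mk _ p) = (fun w => Quot.mk _ (p.1, w)) '' η p.2 := by
  ext d
  constructor
  · rintro ⟨q, hq, w, hw, rfl⟩
    obtain ⟨γ, rfl⟩ := ATrel_of_mk_eq hrel hq.symm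
    obtain ⟨w₀, hw₀, rfl⟩ : w ∈ b γ '' η p.2 := hη γ p.2 hp ▸ hw
    exact ⟨w₀, hw₀, Quot.sound ⟨γ, rfl⟩⟩
  · rintro ⟨w, hw, rfl⟩
    exact ⟨p, rfl, w, hw, rfl⟩

end Graphs

section Retraction

variable {Γ VT W : Type*} [Group Γ] {T : LGraph VT} {ρ : Γ → VT → VT} {b : Γ → W → W}
  {K A L : Cplx W}

variable (T ρ b) in
def ATmultiMapOn (hAK : A.faces ⊆ K.faces) (η : W → Set W)
    (c : (ATsubgraph T ρ K b A hAK).verts) : Set (ATsubgraph T ρ K b A hAK).verts :=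
  Subtype.val ⁻¹' ATmultiMap ρ b η c

lemma mem_ATmultiMapOn {hAK : A.faces ⊆ K.faces} {η : W → Set W}
    {c d : (ATsubgraph T ρ K b A hAK).verts} :
    d ∈ ATmultiMapOn T ρ b hAK η c ↔ (d : Quot (ATrel ρ b)) ∈ ATmultiMap ρ b η c :=
  Iff.rfl

lemma isDefMultiHom_ATmultiMap (hrel : Equivalence (ATrel ρ b)) (hAK : A.faces ⊆ K.faces)
    (hLA : L.faces ⊆ A.faces) {η : W → Set W} (hη : IsDefMultiMap Γ b A L η) :
    IsDefMultiHom (ATsubgraph T ρ K b A hAK).coe {x | (x : Quot (ATrel ρ b)) ∈ ATverts ρ b L}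
      (ATmultiMapOn T ρ b hAK η) := by
  obtain ⟨⟨hmm, hequiv⟩, hfix⟩ := hη
  refine ⟨⟨?_, ?_⟩, ?_⟩
  · rintro ⟨_, p, rfl, hp⟩
    obtain ⟨w, hw⟩ := hmm.1 p.2 hp
    refine ⟨⟨_, (p.1, w), rfl, hmm.subset_verts hp hw⟩, ?_⟩
    rw [mem_ATmultiMapOn, ATmultiMap_mk hrel hequiv hp]
    exact mem_image_of_mem _ hw
  · rintro ⟨_, -⟩ ⟨_, -⟩ ⟨p, q, rfl, rfl, hTpq, hpq⟩
    intro x hx y hy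
    rw [mem_ATmultiMapOn, ATmultiMap_mk hrel hequiv (Cplx.face_subset_verts hpq (mem_insert _ _))]
      at hx
    rw [mem_ATmultiMapOn, ATmultiMap_mk hrel hequiv
      (Cplx.face_subset_verts hpq (mem_insert_of_mem _ (mem_singleton _)))] at hy
    obtain ⟨w, hw, hxw⟩ := hx
    obtain ⟨s, hs, hys⟩ := hy
    exact ⟨(p.1, w), (q.1, s), hxw, hys, hTpq, hmm.pair_mem hpq hw hs⟩
  · rintro ⟨_, -⟩ ⟨p, rfl, hp⟩
    ext ⟨d, -⟩
    rw [mem_ATmultiMapOn, ATmultiMap_mk hrel hequiv (Cplx.verts_mono hLA hp), hfix p.2 hp,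
      image_singleton, mem_singleton_iff, mem_singleton_iff, Subtype.mk.injEq]

lemma ATmultiMap_mono (hrel : Equivalence (ATrel ρ b)) {η η' : W → Set W}
    (hη : ∀ γ : Γ, ∀ v ∈ A.verts, η (b γ v) = b γ '' η v)
    (hη' : ∀ γ : Γ, ∀ v ∈ A.verts, η' (b γ v) = b γ '' η' v) (hle : mmLE A η η')
    {c : Quot (ATrel ρ b)} (hc : c ∈ ATverts ρ b A) : ATmultiMap ρ b η c ⊆ ATmultiMap ρ b η' c := by
  obtain ⟨p, rfl, hp⟩ := hc
  rw [ATmultiMap_mk hrel hη hp, ATmultiMap_mk hrel hη' hp]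
  exact image_mono (hle _ hp)

lemma defMHStep_ATmultiMap (hrel : Equivalence (ATrel ρ b)) (hAK : A.faces ⊆ K.faces)
    (hLA : L.faces ⊆ A.faces) {η η' : W → Set W} (h : cplxDefStep Γ b A L η η') :
    defMHStep (ATsubgraph T ρ K b A hAK).coe {x | (x : Quot (ATrel ρ b)) ∈ ATverts ρ b L}
      (ATmultiMapOn T ρ b hAK η) (ATmultiMapOn T ρ b hAK η') := by
  obtain ⟨hη, hη', hle⟩ := h
  exact ⟨isDefMultiHom_ATmultiMap hrel hAK hLA hη, isDefMultiHom_ATmultiMap hrel hAK hLA hη',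
    hle.imp (fun h c => preimage_mono (ATmultiMap_mono hrel hη.1.2 hη'.1.2 h c.2))
      fun h c => preimage_mono (ATmultiMap_mono hrel hη'.1.2 hη.1.2 h c.2)⟩

theorem isXDefRetract_ATsubgraph (hrel : Equivalence (ATrel ρ b)) (hAK : A.faces ⊆ K.faces)
    (hLA : L.faces ⊆ A.faces) (hcol : CplxCollapses Γ b A L) :
    IsXDefRetract (ATsubgraph T ρ K b A hAK).coe
      {x | (x : Quot (ATrel ρ b)) ∈ ATverts ρ b L} := by
  obtain ⟨f, hf, hzig, hfL⟩ := hcol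
  have hretract : ∀ c : (ATsubgraph T ρ K b A hAK).verts,
      ∃ d : (ATsubgraph T ρ K b A hAK).verts, (d : Quot (ATrel ρ b)) ∈ ATverts ρ b L ∧
        ATmultiMapOn T ρ b hAK (fun v => {f v}) c = {d} := by
    rintro ⟨_, p, rfl, hp⟩
    have hfp : f p.2 ∈ L.verts := by
      have h := hfL {p.2} hp
      rwa [image_singleton] at h
    refine ⟨⟨_, (p.1, f p.2), rfl, Cplx.verts_mono hLA hfp⟩, ⟨_, rfl, hfp⟩, ?_⟩
    ext ⟨d, -⟩
    rw [mem_ATmultiMapOn, ATmultiMap_mk hrel hf.1.2 hp, image_singleton, mem_singleton_iff,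
      mem_singleton_iff, Subtype.ext_iff]
  choose F hFL hF using hretract
  have hid : ATmultiMapOn T ρ b hAK (fun v => {v}) = fun c => {c} := by
    funext c
    ext d
    rw [mem_ATmultiMapOn, ATmultiMap_singleton]
    exact Subtype.ext_iff.symm
  refine ⟨F, funext hF ▸ isDefMultiHom_ATmultiMap hrel hAK hLA hf, ?_, hFL⟩
  rw [← hid, ← funext hF]
  exact ReflTransGen.lift (ATmultiMapOn T ρ b hAK)
    (fun _ _ h => defMHStep_ATmultiMap hrel hAK hLA h) _ _ hzig

theorem IsNDRPair.graphNDRPair (hrel : Equivalence (ATrel ρ b)) (hK : K.IsInvariant b)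
    (hL : L.IsInvariant b) (hLK : L.faces ⊆ K.faces) {r : ℕ} (h : IsNDRPair Γ b K L r) :
    GraphNDRPair (ATgraph T ρ K b) (ATsubgraph T ρ K b L hLK) r := by
  obtain ⟨A, hAK, hLA, -, hνA, hcol⟩ := h
  exact ⟨ATsubgraph T ρ K b A hAK, ATsubgraph_mono hLK hAK hLA,
    (gnbhdIter_ATsubgraph_le hrel hK hL hLK r).trans (ATsubgraph_mono _ hAK hνA),
    isXDefRetract_ATsubgraph hrel hAK hLA hcol⟩

end Retraction

theorem AT_sdIter_graphNDRPair_general {Γ VT : Type*} {VK : Type u} [Group Γ]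
    (T : LGraph VT) (ρ : Γ → VT → VT) (hT : IsRightGraphAction Γ T ρ)
    (K L : Cplx VK) (a : Γ → VK → VK) (ha : IsCplxAction Γ a K)
    (haL : ∀ γ : Γ, ∀ σ ∈ L.faces, (a γ) '' σ ∈ L.faces)
    (hfin : K.verts.Finite) (hLK : L.faces ⊆ K.faces)
    (r : ℕ) (hr : 2 ≤ r) :
    GraphNDRPair (ATgraph T ρ (sdIter K r) (actIter a r))
      (ATsubgraph T ρ (sdIter K r) (actIter a r) (sdIter L r) (sdIter_faces_mono hLK r))
      (2 ^ (r - 2)) := by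
  obtain ⟨m, rfl⟩ : ∃ m, r = m + 2 := ⟨r - 2, by omega⟩
  rw [Nat.add_sub_cancel]
  exact (isNDRPair_sdIter ha haL hfin hLK m).graphNDRPair
    (ATrel_equivalence hT (ha.isAction.actIter (m + 2))) (ha.isInvariant.sdIter (m + 2))
    (Cplx.IsInvariant.sdIter haL (m + 2)) _

/-- Let Γ be a finite group, T a right Γ-graph, and (K,L) a pair of finite
Γ-simplicial complexes.  Then for every integer r ≥ 2, the pair
(A_T(Sd^r(K)), A_T(Sd^r(L))) is a 2^{r-2}-NDR pair of graphs. -/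
theorem AT_sdIter_graphNDRPair {Γ VT : Type*} {VK : Type u} [Group Γ] [Finite Γ]
    (T : LGraph VT) (ρ : Γ → VT → VT) (hT : IsRightGraphAction Γ T ρ)
    (K L : Cplx VK) (a : Γ → VK → VK) (ha : IsCplxAction Γ a K)
    (haL : ∀ γ : Γ, ∀ σ ∈ L.faces, (a γ) '' σ ∈ L.faces)
    (hfin : K.verts.Finite) (hLK : L.faces ⊆ K.faces)
    (r : ℕ) (hr : 2 ≤ r) :
    GraphNDRPair (ATgraph T ρ (sdIter K r) (actIter a r))
      (ATsubgraph T ρ (sdIter K r) (actIter a r) (sdIter L r) (sdIter_faces_mono hLK r))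
      (2 ^ (r - 2)) :=
  AT_sdIter_graphNDRPair_general T ρ hT K L a ha haL hfin hLK r hr
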